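/- arXiv:gr-qc/9907023 — 4 statements merged into one kernel-verified Lean document; each statement's English description precedes it below -/
import Mathlib

section
/- Let C : Fin 4 → Fin 4 → Fin 4 → ℝ (written C^a_{bc}) satisfy C^a_{bc} = −C^a_{cb}, and let B : Fin 4 → Fin 4 → Fin 4 → Fin 4 → ℝ (written B^a_{bcd}) satisfy B^a_{bcd} = −B^a_{cbd}. Assume the 4-indexed Bianchi identity: for all a, u, v, w, the full signed antisymmetrization over the triple (u,v,w) of the expression B^a_{uvw} + Σ_m C^a_{mv}·C^m_{wu} vanishes, i.e. Σ_{σ ∈ S₃} sgn(σ)·[ B^a_{σ(u)σ(v)σ(w)} + Σ_m C^a_{m σ(v)}·C^m_{σ(w)σ(u)} ] = 0. Then the 2-indexed Bianchi identity holds: for all k, n, (⁽²⁾B_{kn} − ⁽²⁾B_{nk}) + ⁽³⁾B_{kn} + ⁽²⁾A_{kn} = 0, where ⁽²⁾B_{ab} := Σ_m B^m_{mab}, ⁽³⁾B_{ab} := Σ_m B^m_{abm}, C_a := Σ_j C^j_{aj}, and ⁽²⁾A_{kn} := Σ_m C_m·C^m_{kn}. -/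
/-- Enumeration of the six permutations of `Fin 3` for summation. -/
lemma perm3_sum {M : Type*} [AddCommMonoid M] (f : Equiv.Perm (Fin 3) → M) :
    ∑ σ : Equiv.Perm (Fin 3), f σ =
      f 1 + f (Equiv.swap 0 1) + f (Equiv.swap 0 2) + f (Equiv.swap 1 2)
        + f (Equiv.swap 0 1 * Equiv.swap 0 2) + f (Equiv.swap 0 2 * Equiv.swap 0 1) := by
  rw [show (Finset.univ : Finset (Equiv.Perm (Fin 3))) =
      {1, Equiv.swap 0 1, Equiv.swap 0 2, Equiv.swap 1 2,
        Equiv.swap 0 1 * Equiv.swap 0 2, Equiv.swap 0 2 * Equiv.swap 0 1} from by decide]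
  rw [Finset.sum_insert (by decide), Finset.sum_insert (by decide),
      Finset.sum_insert (by decide), Finset.sum_insert (by decide),
      Finset.sum_insert (by decide), Finset.sum_singleton]
  abel

/-- the 4-indexed Bianchi identity (full signed antisymmetrization over
the three slots `(u,v,w)` of `B^a_{uvw} + Σ_m C^a_{mv} C^m_{wu}` vanishes) implies the
2-indexed Bianchi identity
`(⁽²⁾B_{kn} − ⁽²⁾B_{nk}) + ⁽³⁾B_{kn} + ⁽²⁾A_{kn} = 0`. -/
theorem two_indexed_bianchi
    (C : Fin 4 → Fin 4 → Fin 4 → ℝ)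
    (hC : ∀ a b c, C a b c = - C a c b)
    (B : Fin 4 → Fin 4 → Fin 4 → Fin 4 → ℝ)
    (hB : ∀ a b c d, B a b c d = - B a c b d)
    (bianchi4 : ∀ a u v w : Fin 4,
      ∑ σ : Equiv.Perm (Fin 3),
        ((Equiv.Perm.sign σ : ℤ) : ℝ) *
          (B a (![u, v, w] (σ 0)) (![u, v, w] (σ 1)) (![u, v, w] (σ 2)) +
            ∑ m, C a m (![u, v, w] (σ 1)) * C m (![u, v, w] (σ 2)) (![u, v, w] (σ 0)))
        = 0) :
    ∀ k n : Fin 4,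
      ((∑ m, B m m k n) - (∑ m, B m m n k)) + (∑ m, B m k n m) +
        (∑ m, (∑ j, C j m j) * C m k n) = 0 := by
  intro k n
  have h := fun m => bianchi4 m m k n
  simp only [perm3_sum, Equiv.Perm.one_def, Equiv.refl_apply, Equiv.Perm.mul_apply,
    Equiv.swap_apply_def, Equiv.Perm.sign_one, Equiv.Perm.sign_refl,
    Equiv.Perm.sign_swap (by decide : (0:Fin 3) ≠ 1),
    Equiv.Perm.sign_swap (by decide : (0:Fin 3) ≠ 2),
    Equiv.Perm.sign_swap (by decide : (1:Fin 3) ≠ 2),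
    map_mul, Fin.reduceEq, reduceIte, Matrix.cons_val_zero, Matrix.cons_val_one,
    Matrix.head_cons, Matrix.cons_val_two, Matrix.tail_cons] at h
  -- cleaned per-m identity (using the antisymmetry of `B` in its middle pair)
  have h2 : ∀ m : Fin 4,
      2 * B m m k n - 2 * B m m n k + 2 * B m k n m
        + (∑ x, C m x k * C x n m) - (∑ x, C m x m * C x n k)
        - (∑ x, C m x k * C x m n) - (∑ x, C m x n * C x k m)
        + (∑ x, C m x m * C x k n) + (∑ x, C m x n * C x m k) = 0 := by
    intro m
    have h1 := h m
    push_cast at h1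
    have e1 : B m k m n = -B m m k n := hB m k m n
    have e2 : B m n k m = -B m k n m := hB m n k m
    have e3 : B m n m k = -B m m n k := hB m n m k
    linarith
  have H := Finset.sum_eq_zero (fun m (_ : m ∈ Finset.univ) => h2 m)
  simp only [Finset.sum_add_distrib, Finset.sum_sub_distrib, ← Finset.mul_sum] at H
  -- relabeling identities for the quadratic terms
  have c1 : (∑ m : Fin 4, ∑ x : Fin 4, C m x k * C x n m)
      = -∑ m : Fin 4, ∑ x : Fin 4, C m x k * C x m n := by
    simp only [show ∀ m x : Fin 4, C m x k * C x n m = -(C m x k * C x m n) from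
      fun m x => by rw [hC x n m]; ring, Finset.sum_neg_distrib]
  have c2 : (∑ m : Fin 4, ∑ x : Fin 4, C m x m * C x n k)
      = -∑ m : Fin 4, ∑ x : Fin 4, C m x m * C x k n := by
    simp only [show ∀ m x : Fin 4, C m x m * C x n k = -(C m x m * C x k n) from
      fun m x => by rw [hC x n k]; ring, Finset.sum_neg_distrib]
  have c4 : (∑ m : Fin 4, ∑ x : Fin 4, C m x n * C x k m)
      = -∑ m : Fin 4, ∑ x : Fin 4, C m x k * C x m n := by
    rw [Finset.sum_comm]
    simp only [show ∀ o i : Fin 4, C i o n * C o k i = -(C o i k * C i o n) from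
      fun o i => by rw [hC o k i]; ring, Finset.sum_neg_distrib]
  have c6 : (∑ m : Fin 4, ∑ x : Fin 4, C m x n * C x m k)
      = ∑ m : Fin 4, ∑ x : Fin 4, C m x k * C x m n := by
    rw [Finset.sum_comm]
    exact Finset.sum_congr rfl fun o _ => Finset.sum_congr rfl fun i _ => mul_comm _ _
  have cA : (∑ m : Fin 4, (∑ j : Fin 4, C j m j) * C m k n)
      = ∑ m : Fin 4, ∑ x : Fin 4, C m x m * C x k n := by
    simp only [Finset.sum_mul]
    rw [Finset.sum_comm]
  rw [cA]
  linarith [H, c1, c2, c4, c6]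
end

section
/- For the diagonal static ansatz, the contracted B-objects are: ⁽¹⁾B_{00} = e^{−2g}(Δf − ∇f·∇g); ⁽¹⁾B_{0m} = ⁽¹⁾B_{m0} = 0; ⁽¹⁾B_{km} = e^{−2g}[(g_{km} − g_k g_m) − δ_{km}(Δg − |∇g|²)]; ⁽²⁾B_{00} = ⁽²⁾B_{0m} = ⁽²⁾B_{m0} = 0; ⁽²⁾B_{np} = −e^{−2g}[2(g_{np} − g_n g_p) + (f_{np} − f_n g_p)]; ⁽³⁾B_{ab} = 0 for all a,b; and the scalar B = e^{−2g}[2(Δg − |∇g|²) + (Δf − ∇f·∇g)]. -/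
noncomputable section

/-- Partial derivative along the `i`-th spatial coordinate of `ℝ³`. -/
def pd (i : Fin 3) (h : (Fin 3 → ℝ) → ℝ) : (Fin 3 → ℝ) → ℝ :=
  fun x => fderiv ℝ h x (Pi.single i 1)

/-- The operator `∂_α` on `ℝ⁴`-indexed coordinates, acting on fields independent of
the time coordinate `x⁰` (so `∂₀ ≡ 0`). -/
def D : Fin 4 → ((Fin 3 → ℝ) → ℝ) → (Fin 3 → ℝ) → ℝ :=
  ![fun _ _ => 0, pd 0, pd 1, pd 2]

/-- The diagonal static coframe `θ^a_α = diag(e^f, e^g, e^g, e^g)`. -/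
def θc (f g : (Fin 3 → ℝ) → ℝ) (a α : Fin 4) (x : Fin 3 → ℝ) : ℝ :=
  if a = α then Real.exp (if a = 0 then f x else g x) else 0

/-- The inverse frame `e_a^α = diag(e^{−f}, e^{−g}, e^{−g}, e^{−g})`. -/
def fr (f g : (Fin 3 → ℝ) → ℝ) (a α : Fin 4) (x : Fin 3 → ℝ) : ℝ :=
  if a = α then Real.exp (-(if a = 0 then f x else g x)) else 0

/-- `C^a_{bc} := Σ_{α,β} e_b^α e_c^β (∂_α θ^a_β − ∂_β θ^a_α)`. -/
def Cc (f g : (Fin 3 → ℝ) → ℝ) (a b c : Fin 4) (x : Fin 3 → ℝ) : ℝ :=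
  ∑ α, ∑ β, fr f g b α x * fr f g c β x * (D α (θc f g a β) x - D β (θc f g a α) x)

/-- `B^a_{bcd} := Σ_α e_d^α ∂_α C^a_{bc}`. -/
def Bb (f g : (Fin 3 → ℝ) → ℝ) (a b c d : Fin 4) (x : Fin 3 → ℝ) : ℝ :=
  ∑ α, fr f g d α x * D α (Cc f g a b c) x

/-- The Minkowski matrix `η = diag(1,−1,−1,−1)` (its own inverse). -/
def eta (a b : Fin 4) : ℝ := if a = b then (if a = 0 then 1 else -1) else 0

/-- Spatial Laplacian `Δh := h_{11} + h_{22} + h_{33}`. -/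
def lap (h : (Fin 3 → ℝ) → ℝ) (x : Fin 3 → ℝ) : ℝ := ∑ i, pd i (pd i h) x

/-- `∇h₁·∇h₂ := Σ_m (h₁)_m (h₂)_m`. -/
def gdot (h₁ h₂ : (Fin 3 → ℝ) → ℝ) (x : Fin 3 → ℝ) : ℝ := ∑ i, pd i h₁ x * pd i h₂ x

/-- `C` with the first index lowered: `C_{abc} := Σ_{a'} η_{aa'} C^{a'}_{bc}`. -/
def Clow (f g : (Fin 3 → ℝ) → ℝ) (a b c : Fin 4) (x : Fin 3 → ℝ) : ℝ :=
  ∑ p, eta a p * Cc f g p b c x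

/-- The 1-indexed `C`-object `C_a := Σ_m C^m_{am}`. -/
def Cone (f g : (Fin 3 → ℝ) → ℝ) (a : Fin 4) (x : Fin 3 → ℝ) : ℝ :=
  ∑ m, Cc f g m a m x

/-- The raised 1-indexed `C`-object `C^a := Σ_b η^{ab} C_b`. -/
def Cup (f g : (Fin 3 → ℝ) → ℝ) (a : Fin 4) (x : Fin 3 → ℝ) : ℝ :=
  ∑ b, eta a b * Cone f g b x

/-- `B` with the first index lowered. -/
def Blow (f g : (Fin 3 → ℝ) → ℝ) (a b c d : Fin 4) (x : Fin 3 → ℝ) : ℝ :=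
  ∑ p, eta a p * Bb f g p b c d x

/-- `⁽¹⁾B_{ab} := Σ_{m,k} η^{mk} B_{abmk}`. -/
def B1 (f g : (Fin 3 → ℝ) → ℝ) (a b : Fin 4) (x : Fin 3 → ℝ) : ℝ :=
  ∑ m, ∑ k, eta m k * Blow f g a b m k x

/-- `⁽²⁾B_{ab} := Σ_m B^m_{mab}`. -/
def B2 (f g : (Fin 3 → ℝ) → ℝ) (a b : Fin 4) (x : Fin 3 → ℝ) : ℝ :=
  ∑ m, Bb f g m m a b x

/-- `⁽³⁾B_{ab} := Σ_m B^m_{abm}`. -/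
def B3 (f g : (Fin 3 → ℝ) → ℝ) (a b : Fin 4) (x : Fin 3 → ℝ) : ℝ :=
  ∑ m, Bb f g m a b m x

/-- The scalar `B := Σ_{a,b,c} η^{bc} B^a_{abc}`. -/
def Bscal (f g : (Fin 3 → ℝ) → ℝ) (x : Fin 3 → ℝ) : ℝ :=
  ∑ a, ∑ b, ∑ c, eta b c * Bb f g a a b c x

/-- `⁽¹⁾A_{ab} := Σ_m C_{abm} C^m`. -/
def A1 (f g : (Fin 3 → ℝ) → ℝ) (a b : Fin 4) (x : Fin 3 → ℝ) : ℝ :=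
  ∑ m, Clow f g a b m x * Cup f g m x

/-- `⁽²⁾A_{ab} := Σ_m C_{mab} C^m`. -/
def A2 (f g : (Fin 3 → ℝ) → ℝ) (a b : Fin 4) (x : Fin 3 → ℝ) : ℝ :=
  ∑ m, Clow f g m a b x * Cup f g m x

/-- `⁽³⁾A_{ab} := Σ_{m,n} C_{amn} C_b{}^{mn}`. -/
def A3 (f g : (Fin 3 → ℝ) → ℝ) (a b : Fin 4) (x : Fin 3 → ℝ) : ℝ :=
  ∑ m, ∑ n, Clow f g a m n x * (∑ p, ∑ q, eta m p * eta n q * Clow f g b p q x)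

/-- `⁽⁴⁾A_{ab} := Σ_{m,n} C_{amn} C^m{}_b{}^n`. -/
def A4 (f g : (Fin 3 → ℝ) → ℝ) (a b : Fin 4) (x : Fin 3 → ℝ) : ℝ :=
  ∑ m, ∑ n, Clow f g a m n x * (∑ p, ∑ q, eta m p * eta n q * Clow f g p b q x)

/-- `⁽⁵⁾A_{ab} := Σ_{m,n} C_{man} C^n{}_b{}^m`. -/
def A5 (f g : (Fin 3 → ℝ) → ℝ) (a b : Fin 4) (x : Fin 3 → ℝ) : ℝ :=
  ∑ m, ∑ n, Clow f g m a n x * (∑ p, ∑ q, eta n p * eta m q * Clow f g p b q x)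

/-- `⁽⁶⁾A_{ab} := Σ_{m,n} C_{man} C^m{}_b{}^n`. -/
def A6 (f g : (Fin 3 → ℝ) → ℝ) (a b : Fin 4) (x : Fin 3 → ℝ) : ℝ :=
  ∑ m, ∑ n, Clow f g m a n x * (∑ p, ∑ q, eta m p * eta n q * Clow f g p b q x)

/-- `⁽⁷⁾A_{ab} := C_a C_b`. -/
def A7 (f g : (Fin 3 → ℝ) → ℝ) (a b : Fin 4) (x : Fin 3 → ℝ) : ℝ :=
  Cone f g a x * Cone f g b x

/-- The scalar `⁽¹⁾A`, the η-trace of `⁽¹⁾A_{ab}`. -/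
def A1s (f g : (Fin 3 → ℝ) → ℝ) (x : Fin 3 → ℝ) : ℝ := ∑ a, ∑ b, eta a b * A1 f g a b x

/-- The scalar `⁽²⁾A`, the η-trace of `⁽³⁾A_{ab}`. -/
def A2s (f g : (Fin 3 → ℝ) → ℝ) (x : Fin 3 → ℝ) : ℝ := ∑ a, ∑ b, eta a b * A3 f g a b x

/-- The scalar `⁽³⁾A`, the η-trace of `⁽⁴⁾A_{ab}`. -/
def A3s (f g : (Fin 3 → ℝ) → ℝ) (x : Fin 3 → ℝ) : ℝ := ∑ a, ∑ b, eta a b * A4 f g a b x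

namespace CBhelp
variable {h u v : (Fin 3 → ℝ) → ℝ}

lemma pd_contDiff (hh : ContDiff ℝ (⊤ : ℕ∞) h) (i : Fin 3) : ContDiff ℝ (⊤ : ℕ∞) (pd i h) :=
  (hh.fderiv_right le_rfl).clm_apply contDiff_const

lemma pd_exp (hh : ContDiff ℝ (⊤ : ℕ∞) h) (i : Fin 3) :
    pd i (fun x => Real.exp (h x)) = fun x => Real.exp (h x) * pd i h x := by
  funext x
  simp [pd, fderiv_exp (hh.differentiable (by simp) x)]

lemma pd_mul (hu : ContDiff ℝ (⊤ : ℕ∞) u) (hv : ContDiff ℝ (⊤ : ℕ∞) v) (i : Fin 3) :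
    pd i (fun x => u x * v x) = fun x => pd i u x * v x + u x * pd i v x := by
  funext x
  simp [pd, fderiv_fun_mul (hu.differentiable (by simp) x) (hv.differentiable (by simp) x)]
  ring

lemma pd_sub (hu : ContDiff ℝ (⊤ : ℕ∞) u) (hv : ContDiff ℝ (⊤ : ℕ∞) v) (i : Fin 3) :
    pd i (fun x => u x - v x) = fun x => pd i u x - pd i v x := by
  funext x
  simp [pd, fderiv_fun_sub (hu.differentiable (by simp) x) (hv.differentiable (by simp) x)]

lemma pd_neg (hu : ContDiff ℝ (⊤ : ℕ∞) u) (i : Fin 3) :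
    pd i (fun x => -(u x)) = fun x => -(pd i u x) := by
  funext x
  simp [pd, fderiv_neg]

lemma pd_zero (i : Fin 3) : pd i (fun _ => (0:ℝ)) = fun _ => 0 := by
  funext x; simp [pd]

lemma pd_comm (hh : ContDiff ℝ (⊤ : ℕ∞) h) (i j : Fin 3) (x : Fin 3 → ℝ) :
    pd i (pd j h) x = pd j (pd i h) x := by
  have hs : IsSymmSndFDerivAt ℝ h x :=
    hh.contDiffAt.isSymmSndFDerivAt (by rw [minSmoothness_of_isRCLikeNormedField]; exact WithTop.coe_le_coe.mpr (le_top : (2 : ℕ∞) ≤ ⊤))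
  have hd : ContDiff ℝ (⊤ : ℕ∞) (fderiv ℝ h) := hh.fderiv_right le_rfl
  have e : ∀ v w : Fin 3 → ℝ,
      fderiv ℝ (fun y => fderiv ℝ h y v) x w = fderiv ℝ (fderiv ℝ h) x w v := by
    intro v w
    rw [fderiv_clm_apply (hd.differentiable (by simp) x) (differentiableAt_const v)]
    simp
  show fderiv ℝ (fun y => fderiv ℝ h y (Pi.single j 1)) x (Pi.single i 1)
      = fderiv ℝ (fun y => fderiv ℝ h y (Pi.single i 1)) x (Pi.single j 1)
  rw [e, e]
  exact hs.eq _ _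

/-- D-versions -/
lemma D_contDiff (α : Fin 4) (hh : ContDiff ℝ (⊤ : ℕ∞) h) : ContDiff ℝ (⊤ : ℕ∞) (D α h) := by
  fin_cases α
  · exact contDiff_const
  all_goals exact pd_contDiff hh _

lemma D_exp (α : Fin 4) (hh : ContDiff ℝ (⊤ : ℕ∞) h) :
    D α (fun x => Real.exp (h x)) = fun x => Real.exp (h x) * D α h x := by
  fin_cases α
  · funext x; simp [D]
  all_goals simpa [D] using pd_exp hh _

lemma D_expneg (α : Fin 4) (hh : ContDiff ℝ (⊤ : ℕ∞) h) :
    D α (fun x => Real.exp (-(h x))) = fun x => -(Real.exp (-(h x)) * D α h x) := by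
  have h1 := D_exp α (hh.neg)
  have h2 : D α (fun x => -(h x)) = fun x => -(D α h x) := by
    fin_cases α
    · funext x; simp [D]
    all_goals simpa [D] using pd_neg hh _
  rw [show (fun x => Real.exp (-(h x))) = fun x => Real.exp ((fun y => -(h y)) x) from rfl,
    h1, h2]
  funext x; ring

lemma D_mul (α : Fin 4) (hu : ContDiff ℝ (⊤ : ℕ∞) u) (hv : ContDiff ℝ (⊤ : ℕ∞) v) :
    D α (fun x => u x * v x) = fun x => D α u x * v x + u x * D α v x := by
  fin_cases α
  · funext x; simp [D]
  all_goals simpa [D] using pd_mul hu hv _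

lemma D_sub (α : Fin 4) (hu : ContDiff ℝ (⊤ : ℕ∞) u) (hv : ContDiff ℝ (⊤ : ℕ∞) v) :
    D α (fun x => u x - v x) = fun x => D α u x - D α v x := by
  fin_cases α
  · funext x; simp [D]
  all_goals simpa [D] using pd_sub hu hv _

lemma D_zero (α : Fin 4) : D α (fun _ => (0:ℝ)) = fun _ => 0 := by
  fin_cases α
  · funext x; simp [D]
  all_goals simpa [D] using pd_zero _

/-- the conformal factors -/
def ph (f g : (Fin 3 → ℝ) → ℝ) (a : Fin 4) : (Fin 3 → ℝ) → ℝ :=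
  if a = 0 then f else g

variable {f g : (Fin 3 → ℝ) → ℝ}

lemma ph_contDiff (hf : ContDiff ℝ (⊤ : ℕ∞) f) (hg : ContDiff ℝ (⊤ : ℕ∞) g) (a : Fin 4) :
    ContDiff ℝ (⊤ : ℕ∞) (ph f g a) := by
  unfold ph; split <;> assumption

lemma θc_eq (a β : Fin 4) :
    θc f g a β = if a = β then (fun x => Real.exp (ph f g a x)) else (fun _ => 0) := by
  funext x
  simp only [θc, ph]
  split_ifs <;> first | rfl | simp_all

lemma D_zero_apply (h : (Fin 3 → ℝ) → ℝ) (x : Fin 3 → ℝ) : D 0 h x = 0 := rfl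

lemma D0 (h : (Fin 3 → ℝ) → ℝ) : D 0 h = fun _ => (0:ℝ) := rfl
lemma D1 (h : (Fin 3 → ℝ) → ℝ) : D 1 h = pd 0 h := rfl
lemma D2 (h : (Fin 3 → ℝ) → ℝ) : D 2 h = pd 1 h := rfl
lemma D3 (h : (Fin 3 → ℝ) → ℝ) : D 3 h = pd 2 h := rfl

lemma fr_eq (a α : Fin 4) (x : Fin 3 → ℝ) :
    fr f g a α x = if a = α then Real.exp (-(ph f g a x)) else 0 := by
  simp only [fr, ph]
  split_ifs <;> rfl


lemma Cc_closed (hf : ContDiff ℝ (⊤ : ℕ∞) f) (hg : ContDiff ℝ (⊤ : ℕ∞) g) (a b c : Fin 4) :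
    Cc f g a b c = fun x =>
      (if a = c then Real.exp (-(ph f g b x)) * D b (ph f g a) x else 0)
      - (if a = b then Real.exp (-(ph f g c x)) * D c (ph f g a) x else 0) := by
  funext x
  have hD : ∀ α β : Fin 4, D α (θc f g a β) x
      = if a = β then Real.exp (ph f g a x) * D α (ph f g a) x else 0 := by
    intro α β
    rw [θc_eq]
    split
    · rw [D_exp α (ph_contDiff hf hg a)]
    · rw [D_zero]
  simp only [Cc, fr_eq, ite_mul, zero_mul, mul_ite, mul_zero, Finset.sum_ite_eq,
    Finset.mem_univ, if_true, hD, ph, ite_apply]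
  clear hD
  split_ifs <;> subst_vars
  all_goals try exact absurd (rfl : (0:Fin 4) = 0) (by assumption)
  all_goals (simp only [Real.exp_neg, D_zero_apply]; (try field_simp) <;> ring)

lemma D_neg (α : Fin 4) (hu : ContDiff ℝ (⊤ : ℕ∞) u) :
    D α (fun x => -(u x)) = fun x => -(D α u x) := by
  fin_cases α
  · funext x; simp [D]
  all_goals simpa [D] using pd_neg hu _

lemma Bb_closed (hf : ContDiff ℝ (⊤ : ℕ∞) f) (hg : ContDiff ℝ (⊤ : ℕ∞) g) (a b c d : Fin 4) :
    Bb f g a b c d = fun x =>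
      Real.exp (-(ph f g d x)) * (
        (if a = c then Real.exp (-(ph f g b x)) *
          (D d (D b (ph f g a)) x - D d (ph f g b) x * D b (ph f g a) x) else 0)
        - (if a = b then Real.exp (-(ph f g c x)) *
          (D d (D c (ph f g a)) x - D d (ph f g c) x * D c (ph f g a) x) else 0)) := by
  have key : ∀ a' b' : Fin 4, D d (fun x => Real.exp (-(ph f g b' x)) * D b' (ph f g a') x)
      = fun x => Real.exp (-(ph f g b' x)) *
          (D d (D b' (ph f g a')) x - D d (ph f g b') x * D b' (ph f g a') x) := by
    intro a' b'
    rw [D_mul d ((ph_contDiff hf hg b').neg.exp) (D_contDiff b' (ph_contDiff hf hg a')),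
      D_expneg d (ph_contDiff hf hg b')]
    funext x; ring
  have hsm : ∀ a' b' : Fin 4,
      ContDiff ℝ (⊤ : ℕ∞) (fun x => Real.exp (-(ph f g b' x)) * D b' (ph f g a') x) :=
    fun a' b' => (ph_contDiff hf hg b').neg.exp.mul (D_contDiff b' (ph_contDiff hf hg a'))
  funext x
  simp only [Bb, fr_eq, ite_mul, zero_mul, Finset.sum_ite_eq, Finset.mem_univ, if_true]
  rw [Cc_closed hf hg]
  by_cases hac : a = c <;> by_cases hab : a = b
  · subst hac; subst hab
    simp only [eq_self_iff_true, if_true]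
    rw [D_sub d (hsm a a) (hsm a a), key]
  · subst hac
    simp only [eq_self_iff_true, if_true, if_neg hab, sub_zero]
    rw [key]
  · subst hab
    simp only [eq_self_iff_true, if_true, if_neg hac, zero_sub]
    rw [D_neg d (hsm a c), key]
  · simp only [if_neg hac, if_neg hab, sub_zero]
    rw [D_zero]

end CBhelp

set_option maxHeartbeats 1000000

/-- the contracted `B`-objects of the diagonal static ansatz. -/
theorem contracted_B_objects_diagonal_static_ansatz
    (f g : (Fin 3 → ℝ) → ℝ) (hf : ContDiff ℝ (⊤ : ℕ∞) f) (hg : ContDiff ℝ (⊤ : ℕ∞) g)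
    (x : Fin 3 → ℝ) :
    B1 f g 0 0 x = Real.exp (-(2 * g x)) * (lap f x - gdot f g x) ∧
    (∀ m : Fin 4, m ≠ 0 → B1 f g 0 m x = 0 ∧ B1 f g m 0 x = 0) ∧
    (∀ k m : Fin 4, k ≠ 0 → m ≠ 0 →
      B1 f g k m x = Real.exp (-(2 * g x)) *
        ((D m (D k g) x - D k g x * D m g x) -
          (if k = m then 1 else 0) * (lap g x - gdot g g x))) ∧
    B2 f g 0 0 x = 0 ∧
    (∀ m : Fin 4, m ≠ 0 → B2 f g 0 m x = 0 ∧ B2 f g m 0 x = 0) ∧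
    (∀ n p : Fin 4, n ≠ 0 → p ≠ 0 →
      B2 f g n p x = -(Real.exp (-(2 * g x)) *
        (2 * (D p (D n g) x - D n g x * D p g x) +
          (D p (D n f) x - D n f x * D p g x)))) ∧
    (∀ a b : Fin 4, B3 f g a b x = 0) ∧
    Bscal f g x = Real.exp (-(2 * g x)) *
      (2 * (lap g x - gdot g g x) + (lap f x - gdot f g x)) := by
  have h2 : Real.exp (-(2 * g x)) = Real.exp (-(g x)) * Real.exp (-(g x)) := by
    rw [← Real.exp_add]; ring_nf
  have T := fun (Z : Prop) (h : Z) => h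
  refine ⟨?_, ?_, ?_, ?_, ?_, ?_, ?_, ?_⟩
  · simp [B1, Blow, eta, CBhelp.Bb_closed hf hg, CBhelp.ph, CBhelp.pd_zero, lap, gdot,
      Fin.sum_univ_four, Fin.sum_univ_three, CBhelp.D0, CBhelp.D1, CBhelp.D2, CBhelp.D3, h2]
    ring
  · intro m hm
    fin_cases m
    · exfalso; revert hm; decide
    all_goals
      refine ⟨?_, ?_⟩ <;>
      · simp [B1, Blow, eta, CBhelp.Bb_closed hf hg, CBhelp.ph, CBhelp.pd_zero, lap, gdot,
          Fin.sum_univ_four, Fin.sum_univ_three, CBhelp.D0, CBhelp.D1, CBhelp.D2, CBhelp.D3, h2]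
        try ring
  · intro k m hk hm
    fin_cases k
    · exfalso; revert hk; decide
    all_goals fin_cases m
    all_goals try (exfalso; revert hm; decide)
    all_goals
      · simp [B1, Blow, eta, CBhelp.Bb_closed hf hg, CBhelp.ph, CBhelp.pd_zero, lap, gdot,
          Fin.sum_univ_four, Fin.sum_univ_three, CBhelp.D0, CBhelp.D1, CBhelp.D2, CBhelp.D3, h2]
        try simp only [CBhelp.pd_comm hg 1 0, CBhelp.pd_comm hg 2 0, CBhelp.pd_comm hg 2 1,
          CBhelp.pd_comm hf 1 0, CBhelp.pd_comm hf 2 0, CBhelp.pd_comm hf 2 1]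
        try ring
  · simp [B2, CBhelp.Bb_closed hf hg, CBhelp.ph, CBhelp.pd_zero, Fin.sum_univ_four, CBhelp.D0, CBhelp.D1, CBhelp.D2, CBhelp.D3]
  · intro m hm
    fin_cases m
    · exfalso; revert hm; decide
    all_goals
      refine ⟨?_, ?_⟩ <;>
      · simp [B2, CBhelp.Bb_closed hf hg, CBhelp.ph, CBhelp.pd_zero, Fin.sum_univ_four, CBhelp.D0, CBhelp.D1, CBhelp.D2, CBhelp.D3]
        try ring
  · intro n p hn hp
    fin_cases n
    · exfalso; revert hn; decide
    all_goals fin_cases p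
    all_goals try (exfalso; revert hp; decide)
    all_goals
      · simp [B2, CBhelp.Bb_closed hf hg, CBhelp.ph, CBhelp.pd_zero, Fin.sum_univ_four, CBhelp.D0, CBhelp.D1, CBhelp.D2, CBhelp.D3, h2]
        try simp only [CBhelp.pd_comm hg 1 0, CBhelp.pd_comm hg 2 0, CBhelp.pd_comm hg 2 1,
          CBhelp.pd_comm hf 1 0, CBhelp.pd_comm hf 2 0, CBhelp.pd_comm hf 2 1]
        try ring
  · intro a b
    fin_cases a <;> fin_cases b <;>
    · simp [B3, CBhelp.Bb_closed hf hg, CBhelp.ph, CBhelp.pd_zero, Fin.sum_univ_four, CBhelp.D0, CBhelp.D1, CBhelp.D2, CBhelp.D3]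
      try simp only [CBhelp.pd_comm hg 1 0, CBhelp.pd_comm hg 2 0, CBhelp.pd_comm hg 2 1,
        CBhelp.pd_comm hf 1 0, CBhelp.pd_comm hf 2 0, CBhelp.pd_comm hf 2 1]
      try ring
  · simp [Bscal, eta, CBhelp.Bb_closed hf hg, CBhelp.ph, CBhelp.pd_zero, lap, gdot,
      Fin.sum_univ_four, Fin.sum_univ_three, CBhelp.D0, CBhelp.D1, CBhelp.D2, CBhelp.D3, h2]
    ring
end
end

section
/- For the diagonal static ansatz, the A-objects ⁽¹⁾A and ⁽²⁾A are: ⁽¹⁾A_{00} = e^{−2g}(|∇f|² + 2∇f·∇g); ⁽¹⁾A_{0m} = ⁽¹⁾A_{m0} = 0; ⁽¹⁾A_{mn} = e^{−2g}[f_m g_n + 2 g_m g_n − δ_{mn}(∇f·∇g + 2|∇g|²)]; ⁽²⁾A_{00} = 0; ⁽²⁾A_{0m} = ⁽²⁾A_{m0} = 0; and ⁽²⁾A_{mn} = e^{−2g}(g_m f_n − g_n f_m). -/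
noncomputable section

section helpers

variable (f g : (Fin 3 → ℝ) → ℝ)

lemma D_exp (h : (Fin 3 → ℝ) → ℝ) (hh : Differentiable ℝ h) (α : Fin 4) (x : Fin 3 → ℝ) :
    D α (fun y => Real.exp (h y)) x = Real.exp (h x) * D α h x := by
  fin_cases α <;> simp [D, pd] <;> rw [fderiv_exp (hh x)] <;> simp [mul_comm]

lemma D_zero (α : Fin 4) (x : Fin 3 → ℝ) : D α (fun _ => (0:ℝ)) x = 0 := by
  fin_cases α <;> simp [D, pd, Matrix.vecHead, Matrix.vecTail]

lemma D0 (h : (Fin 3 → ℝ) → ℝ) (x : Fin 3 → ℝ) : D 0 h x = 0 := rfl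

lemma θc_app (a β : Fin 4) :
    θc f g a β = fun x => if a = β then Real.exp (if a = 0 then f x else g x) else 0 := rfl

/-- `FF a` is `f` if `a = 0` and `g` otherwise. -/
def FF (a : Fin 4) : (Fin 3 → ℝ) → ℝ := if a = 0 then f else g

variable (hf : Differentiable ℝ f) (hg : Differentiable ℝ g)

set_option maxHeartbeats 2000000 in
include hf hg in
lemma Cc_eval (a b c : Fin 4) (x : Fin 3 → ℝ) :
    Cc f g a b c x =
      Real.exp (FF f g a x - FF f g b x - FF f g c x) *
        ((if a = c then D b (FF f g a) x else 0) - (if a = b then D c (FF f g a) x else 0)) := by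
  fin_cases a <;> fin_cases b <;> fin_cases c <;>
    simp [Cc, fr, θc_app, FF, Fin.sum_univ_four, D_zero, D_exp f hf, D_exp g hg,
      Real.exp_sub, Real.exp_neg] <;> field_simp <;> ring

include hf hg in
lemma Cone_zero (x : Fin 3 → ℝ) : Cone f g 0 x = 0 := by
  simp [Cone, Fin.sum_univ_four, Cc_eval f g hf hg, D, FF]

include hf hg in
lemma Cone_spatial (m : Fin 4) (hm : m ≠ 0) (x : Fin 3 → ℝ) :
    Cone f g m x = Real.exp (-(g x)) * (D m f x + 2 * D m g x) := by
  fin_cases m <;> simp_all [Cone, Fin.sum_univ_four, Cc_eval f g hf hg, FF, Real.exp_neg,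
    Real.exp_sub] <;> ring

include hf hg in
lemma Cup_zero (x : Fin 3 → ℝ) : Cup f g 0 x = 0 := by
  simp [Cup, Fin.sum_univ_four, eta, Cone_zero f g hf hg]

include hf hg in
lemma Cup_spatial (m : Fin 4) (hm : m ≠ 0) (x : Fin 3 → ℝ) :
    Cup f g m x = -(Real.exp (-(g x)) * (D m f x + 2 * D m g x)) := by
  fin_cases m <;> simp_all [Cup, Fin.sum_univ_four, eta, Cone_spatial f g hf hg]

end helpers

set_option maxHeartbeats 4000000 in
/-- the `A`-objects `⁽¹⁾A` and `⁽²⁾A` of the diagonal static ansatz. -/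
theorem A1_A2_objects_diagonal_static_ansatz
    (f g : (Fin 3 → ℝ) → ℝ) (hf : ContDiff ℝ (⊤ : ℕ∞) f) (hg : ContDiff ℝ (⊤ : ℕ∞) g)
    (x : Fin 3 → ℝ) :
    A1 f g 0 0 x = Real.exp (-(2 * g x)) * (gdot f f x + 2 * gdot f g x) ∧
    (∀ m : Fin 4, m ≠ 0 → A1 f g 0 m x = 0 ∧ A1 f g m 0 x = 0) ∧
    (∀ m n : Fin 4, m ≠ 0 → n ≠ 0 →
      A1 f g m n x = Real.exp (-(2 * g x)) *
        (D m f x * D n g x + 2 * D m g x * D n g x -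
          (if m = n then 1 else 0) * (gdot f g x + 2 * gdot g g x))) ∧
    A2 f g 0 0 x = 0 ∧
    (∀ m : Fin 4, m ≠ 0 → A2 f g 0 m x = 0 ∧ A2 f g m 0 x = 0) ∧
    (∀ m n : Fin 4, m ≠ 0 → n ≠ 0 →
      A2 f g m n x = Real.exp (-(2 * g x)) *
        (D m g x * D n f x - D n g x * D m f x)) := by
  have hfd : Differentiable ℝ f := hf.differentiable (by simp)
  have hgd : Differentiable ℝ g := hg.differentiable (by simp)
  have e2 : Real.exp (-(2 * g x)) = Real.exp (-(g x)) * Real.exp (-(g x)) := by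
    rw [← Real.exp_add]; ring_nf
  refine ⟨?_, ?_, ?_, ?_, ?_, ?_⟩
  · simp [A1, Clow, Cup_zero f g hfd hgd, Cup_spatial f g hfd hgd,
      Fin.sum_univ_four, eta, Cc_eval f g hfd hgd, FF, gdot, D, e2, Fin.sum_univ_three]
    ring
  · intro m hm
    fin_cases m <;> simp_all [A1, Clow, Cup_zero f g hfd hgd, Cup_spatial f g hfd hgd,
      Fin.sum_univ_four, eta, Cc_eval f g hfd hgd, FF, D0]
  · intro m n hm hn
    fin_cases m <;> fin_cases n <;>
      simp_all [A1, Clow, Cup_zero f g hfd hgd, Cup_spatial f g hfd hgd,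
        Fin.sum_univ_four, eta, Cc_eval f g hfd hgd, FF, gdot, D, e2, Fin.sum_univ_three] <;>
      ring
  · simp [A2, Clow, Cup_zero f g hfd hgd, Cup_spatial f g hfd hgd,
      Fin.sum_univ_four, eta, Cc_eval f g hfd hgd, FF, D0]
  · intro m hm
    fin_cases m <;> simp_all [A2, Clow, Cup_zero f g hfd hgd, Cup_spatial f g hfd hgd,
      Fin.sum_univ_four, eta, Cc_eval f g hfd hgd, FF, D0]
  · intro m n hm hn
    fin_cases m <;> fin_cases n <;>
      simp_all [A2, Clow, Cup_zero f g hfd hgd, Cup_spatial f g hfd hgd,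
        Fin.sum_univ_four, eta, Cc_eval f g hfd hgd, FF, gdot, D, e2, Fin.sum_univ_three] <;>
      ring
end
end

section
/- Let ν₁, ν₂, ν₄, ν₅, ν₆, ν₇, a₁, a₂, b₁, b₂ ∈ ℝ and define f, g : (0,∞) → ℝ by f(r) = 1 + a₁/r + a₂/r² and g(r) = 1 + b₁/r + b₂/r². Then the residual function r ↦ ν₁f''(r) + ν₂g''(r) + (1/r)(2ν₁f'(r) + (2ν₂+ν₄)g'(r)) − ν₅f'(r)² − ν₆g'(r)² − ν₇f'(r)g'(r) is O(r^{−5}) as r → ∞ if and only if ν₄b₁ = 0 and 2ν₁a₂ + 2ν₂b₂ − 2ν₄b₂ = ν₅a₁² + ν₆b₁² + ν₇a₁b₁. -/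
open Filter Asymptotics Set

/-! For `r > 0` the residual is exactly the Laurent polynomial
`A r⁻³ + B r⁻⁴ + C r⁻⁵ + D r⁻⁶` with `A = -ν₄b₁` and `B` the difference of the two sides of the
second condition. Such a polynomial is `O(r⁻⁵)` iff `A = B = 0`, because `c rᵐ = O(rⁿ)` with
`n < m` forces `c = 0`: dividing by `rᵐ`, the constant `c` would tend to `0`. -/

lemma hasDerivAt_const_div_pow {𝕜 : Type*} [NontriviallyNormedField 𝕜] (c : 𝕜) (n : ℕ) {x : 𝕜}
    (hx : x ≠ 0) : HasDerivAt (fun y : 𝕜 => c / y ^ n) (-(n * c) / x ^ (n + 1)) x := by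
  refine ((hasDerivAt_const x c).div (hasDerivAt_pow n x) (pow_ne_zero n hx)).congr_deriv ?_
  rcases n with _ | n
  · simp
  · rw [Nat.add_sub_cancel]
    field_simp
    ring

lemma deriv_eqOn_of_eqOn_of_hasDerivAt {𝕜 E : Type*} [NontriviallyNormedField 𝕜]
    [NormedAddCommGroup E] [NormedSpace 𝕜 E] {f g g' : 𝕜 → E} {s : Set 𝕜}
    (hs : IsOpen s) (hfg : EqOn f g s) (hg : ∀ x ∈ s, HasDerivAt g (g' x) x) :
    EqOn (deriv f) g' s := fun x hx =>
  ((hg x hx).congr_of_eventuallyEq (eventually_of_mem (hs.mem_nhds hx) hfg)).deriv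

lemma deriv_eq_of_eq_one_add_div_add_div_sq {c₁ c₂ : ℝ} {f : ℝ → ℝ}
    (hf : ∀ r, 0 < r → f r = 1 + c₁ / r + c₂ / r ^ 2) {r : ℝ} (hr : 0 < r) :
    deriv f r = -c₁ / r ^ 2 - 2 * c₂ / r ^ 3 ∧
      deriv (deriv f) r = 2 * c₁ / r ^ 3 + 6 * c₂ / r ^ 4 := by
  have hf' : EqOn (deriv f) (fun x => -c₁ / x ^ 2 - 2 * c₂ / x ^ 3) (Ioi 0) := by
    refine deriv_eqOn_of_eqOn_of_hasDerivAt isOpen_Ioi hf fun x hx => ?_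
    have h₁ := hasDerivAt_const_div_pow c₁ 1 hx.ne'
    simp only [pow_one] at h₁
    refine ((h₁.const_add 1).add (hasDerivAt_const_div_pow c₂ 2 hx.ne')).congr_deriv ?_
    push_cast
    ring
  have hf'' : EqOn (deriv (deriv f)) (fun x => 2 * c₁ / x ^ 3 + 6 * c₂ / x ^ 4) (Ioi 0) := by
    refine deriv_eqOn_of_eqOn_of_hasDerivAt isOpen_Ioi hf' fun x hx => ?_
    refine ((hasDerivAt_const_div_pow (-c₁) 2 hx.ne').sub
      (hasDerivAt_const_div_pow (2 * c₂) 3 hx.ne')).congr_deriv ?_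
    push_cast
    ring
  exact ⟨hf' hr, hf'' hr⟩

lemma isBigO_zpow_zpow_atTop_of_le {m n : ℤ} (h : m ≤ n) :
    (fun r : ℝ => r ^ m) =O[atTop] fun r => r ^ n := by
  refine IsBigO.of_bound 1 ?_
  filter_upwards [eventually_ge_atTop 1] with r hr
  have hr0 : 0 < r := one_pos.trans_le hr
  rw [Real.norm_of_nonneg (zpow_pos hr0 m).le, Real.norm_of_nonneg (zpow_pos hr0 n).le, one_mul]
  exact zpow_le_zpow_right₀ hr h

lemma eq_zero_of_const_mul_zpow_isBigO_zpow {c : ℝ} {m n : ℤ} (hnm : n < m)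
    (h : (fun r : ℝ => c * r ^ m) =O[atTop] fun r => r ^ n) : c = 0 := by
  have hc : (fun _ : ℝ => c) =O[atTop] fun r : ℝ => r ^ (n - m) := by
    refine (h.mul (isBigO_refl (fun r : ℝ => r ^ (-m)) atTop)).congr' ?_ ?_ <;>
      filter_upwards [eventually_ne_atTop 0] with r hr
    · rw [mul_assoc, ← zpow_add₀ hr, add_neg_cancel, zpow_zero, mul_one]
    · rw [← zpow_add₀ hr, sub_eq_add_neg]
  exact tendsto_const_nhds_iff.mp (hc.trans_tendsto (tendsto_zpow_atTop_zero (by omega)))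

lemma isBigO_zpow_neg_five_iff (A B C D : ℝ) :
    (fun r : ℝ => A * r ^ (-3 : ℤ) + B * r ^ (-4 : ℤ) + C * r ^ (-5 : ℤ) + D * r ^ (-6 : ℤ))
      =O[atTop] (fun r => r ^ (-5 : ℤ)) ↔ A = 0 ∧ B = 0 := by
  have term (c : ℝ) (m n : ℤ) (h : m ≤ n) : (fun r : ℝ => c * r ^ m) =O[atTop] fun r => r ^ n :=
    (isBigO_zpow_zpow_atTop_of_le h).const_mul_left c
  have tail (n : ℤ) (hn : -5 ≤ n) :
      (fun r : ℝ => C * r ^ (-5 : ℤ) + D * r ^ (-6 : ℤ)) =O[atTop] fun r => r ^ n :=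
    (term C (-5) n hn).add (term D (-6) n (by omega))
  constructor
  · intro h
    have hA : A = 0 := by
      have h₄ := h.trans (isBigO_zpow_zpow_atTop_of_le (by norm_num : (-5 : ℤ) ≤ -4))
      exact eq_zero_of_const_mul_zpow_isBigO_zpow (m := -3) (by norm_num)
        ((h₄.sub ((term B (-4) (-4) le_rfl).add (tail (-4) (by norm_num)))).congr_left
          fun r => by ring)
    subst hA
    exact ⟨rfl, eq_zero_of_const_mul_zpow_isBigO_zpow (m := -4) (by norm_num)
      ((h.sub (tail (-5) le_rfl)).congr_left fun r => by ring)⟩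
  · rintro ⟨rfl, rfl⟩
    exact (tail (-5) le_rfl).congr_left fun r => by ring

noncomputable def secondRadialResidual (ν₁ ν₂ ν₄ ν₅ ν₆ ν₇ : ℝ) (f g : ℝ → ℝ) (r : ℝ) : ℝ :=
  ν₁ * deriv (deriv f) r + ν₂ * deriv (deriv g) r +
    (1 / r) * (2 * ν₁ * deriv f r + (2 * ν₂ + ν₄) * deriv g r) -
    ν₅ * (deriv f r) ^ 2 - ν₆ * (deriv g r) ^ 2 - ν₇ * (deriv f r * deriv g r)

lemma secondRadialResidual_eq {ν₁ ν₂ ν₄ ν₅ ν₆ ν₇ a₁ a₂ b₁ b₂ : ℝ} {f g : ℝ → ℝ}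
    (hf : ∀ r, 0 < r → f r = 1 + a₁ / r + a₂ / r ^ 2)
    (hg : ∀ r, 0 < r → g r = 1 + b₁ / r + b₂ / r ^ 2) {r : ℝ} (hr : 0 < r) :
    secondRadialResidual ν₁ ν₂ ν₄ ν₅ ν₆ ν₇ f g r =
      -(ν₄ * b₁) * r ^ (-3 : ℤ) +
        (2 * ν₁ * a₂ + 2 * ν₂ * b₂ - 2 * ν₄ * b₂ -
          (ν₅ * a₁ ^ 2 + ν₆ * b₁ ^ 2 + ν₇ * (a₁ * b₁))) * r ^ (-4 : ℤ) +
        -(4 * ν₅ * a₁ * a₂ + 4 * ν₆ * b₁ * b₂ + 2 * ν₇ * (a₁ * b₂ + a₂ * b₁)) * r ^ (-5 : ℤ) +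
        -(4 * (ν₅ * a₂ ^ 2 + ν₆ * b₂ ^ 2 + ν₇ * (a₂ * b₂))) * r ^ (-6 : ℤ) := by
  obtain ⟨hf₁, hf₂⟩ := deriv_eq_of_eq_one_add_div_add_div_sq hf hr
  obtain ⟨hg₁, hg₂⟩ := deriv_eq_of_eq_one_add_div_add_div_sq hg hr
  simp only [secondRadialResidual, hf₁, hf₂, hg₁, hg₂, zpow_neg, zpow_ofNat]
  field_simp
  ring

/-- for `f(r) = 1 + a₁/r + a₂/r²` and `g(r) = 1 + b₁/r + b₂/r²` on
`(0,∞)`, the residual of the second radial equation is `O(r^{−5})` as `r → ∞` iff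
`ν₄b₁ = 0` and `2ν₁a₂ + 2ν₂b₂ − 2ν₄b₂ = ν₅a₁² + ν₆b₁² + ν₇a₁b₁`. -/
theorem second_radial_equation_asymptotics
    (ν₁ ν₂ ν₄ ν₅ ν₆ ν₇ a₁ a₂ b₁ b₂ : ℝ) (f g : ℝ → ℝ)
    (hf : ∀ r : ℝ, 0 < r → f r = 1 + a₁ / r + a₂ / r ^ 2)
    (hg : ∀ r : ℝ, 0 < r → g r = 1 + b₁ / r + b₂ / r ^ 2) :
    (fun r : ℝ =>
        ν₁ * deriv (deriv f) r + ν₂ * deriv (deriv g) r +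
          (1 / r) * (2 * ν₁ * deriv f r + (2 * ν₂ + ν₄) * deriv g r) -
          ν₅ * (deriv f r) ^ 2 - ν₆ * (deriv g r) ^ 2 -
          ν₇ * (deriv f r * deriv g r))
      =O[atTop] (fun r : ℝ => r ^ (-5 : ℤ)) ↔
    (ν₄ * b₁ = 0 ∧
      2 * ν₁ * a₂ + 2 * ν₂ * b₂ - 2 * ν₄ * b₂ =
        ν₅ * a₁ ^ 2 + ν₆ * b₁ ^ 2 + ν₇ * (a₁ * b₁)) := by
  change secondRadialResidual ν₁ ν₂ ν₄ ν₅ ν₆ ν₇ f g =O[atTop] _ ↔ _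
  have expansion : secondRadialResidual ν₁ ν₂ ν₄ ν₅ ν₆ ν₇ f g =ᶠ[atTop] _ :=
    (eventually_gt_atTop 0).mono fun r hr => secondRadialResidual_eq hf hg hr
  rw [isBigO_congr expansion EventuallyEq.rfl, isBigO_zpow_neg_five_iff]
  constructor <;> rintro ⟨h₁, h₂⟩ <;> constructor <;> linarith
end
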